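/- Let φ: ℝ≥0 → ℝ≥0 be convex, strictly increasing, bijective with φ(0)=0. Let d* > 0, γ_rel ≥ 0, γ_abs ≥ 0, and set τ_rel = φ(d*·γ_rel)/φ(d*) and τ_abs = φ(d* + γ_abs) − φ(d*). If a cost c' satisfies c' ≤ φ(d*)·(1+τ_rel) + τ_abs, then the corresponding distance d' = φ⁻¹(c') satisfies d' ≤ d*·(1+γ_rel) + γ_abs. -/

import Mathlib

/-- Superadditivity of a convex function vanishing at 0. -/
lemma superadd_of_convex {φ : ℝ → ℝ} (hconv : ConvexOn ℝ (Set.Ici 0) φ)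
    (h0 : φ 0 = 0) {a b : ℝ} (ha : 0 ≤ a) (hb : 0 ≤ b) :
    φ a + φ b ≤ φ (a + b) := by
  rcases eq_or_lt_of_le (add_nonneg ha hb) with h | h
  · have ha0 : a = 0 := by linarith
    have hb0 : b = 0 := by linarith
    simp [ha0, hb0, h0]
  · set s := a + b with hs
    have hA : φ a ≤ (a / s) * φ s := by
      have h1 := hconv.2 (Set.mem_Ici.2 h.le) (Set.mem_Ici.2 le_rfl)
        (div_nonneg ha h.le) (div_nonneg hb h.le)
        (by rw [← add_div, div_self (ne_of_gt h)])
      have h2 : (a/s) • s + (b/s) • (0:ℝ) = a := by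
        simp [smul_eq_mul, div_mul_cancel₀ a (ne_of_gt h)]
      rw [h2] at h1; simpa [h0] using h1
    have hB : φ b ≤ (b / s) * φ s := by
      have h1 := hconv.2 (Set.mem_Ici.2 h.le) (Set.mem_Ici.2 le_rfl)
        (div_nonneg hb h.le) (div_nonneg ha h.le)
        (by rw [← add_div, add_comm b a, div_self (ne_of_gt h)])
      have h2 : (b/s) • s + (a/s) • (0:ℝ) = b := by
        simp [smul_eq_mul, div_mul_cancel₀ b (ne_of_gt h)]
      rw [h2] at h1; simpa [h0] using h1
    have : (a / s) * φ s + (b / s) * φ s = φ s := by field_simp; ring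
    linarith

/-- Let `φ` be a convex, strictly increasing bijection of the nonnegative reals with
`φ 0 = 0`, and `ψ` its inverse. Let `d* > 0`, `γrel ≥ 0`, `γabs ≥ 0` and set
`τrel = φ(d*·γrel)/φ(d*)` and `τabs = φ(d* + γabs) − φ(d*)`. If a cost `c' ≥ 0`
satisfies `c' ≤ φ(d*)·(1+τrel) + τabs`, then the corresponding distance
`d' = ψ c'` satisfies `d' ≤ d*·(1+γrel) + γabs`. -/
theorem combined_tolerance_distance_bound
    (φ ψ : ℝ → ℝ)
    (hmono : StrictMonoOn φ (Set.Ici 0))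
    (hconv : ConvexOn ℝ (Set.Ici 0) φ)
    (h0 : φ 0 = 0)
    (hbij : Set.BijOn φ (Set.Ici 0) (Set.Ici 0))
    (hinv_left : ∀ x ∈ Set.Ici (0 : ℝ), ψ (φ x) = x)
    (hinv_right : ∀ y ∈ Set.Ici (0 : ℝ), φ (ψ y) = y)
    (dstar γrel γabs τrel τabs c' d' : ℝ)
    (hd : 0 < dstar) (hγrel : 0 ≤ γrel) (hγabs : 0 ≤ γabs)
    (hτrel : τrel = φ (dstar * γrel) / φ dstar)
    (hτabs : τabs = φ (dstar + γabs) - φ dstar)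
    (hc' : 0 ≤ c')
    (hbound : c' ≤ φ dstar * (1 + τrel) + τabs)
    (hd' : d' = ψ c') :
    d' ≤ dstar * (1 + γrel) + γabs := by
  have hφd : 0 < φ dstar := by
    have := hmono (Set.mem_Ici.2 le_rfl) (Set.mem_Ici.2 hd.le) hd
    simpa [h0] using this
  have hexp : φ dstar * (1 + τrel) + τabs = φ (dstar * γrel) + φ (dstar + γabs) := by
    rw [hτrel, hτabs]; field_simp; ring
  set s := dstar * (1 + γrel) + γabs with hsdef
  have hsn : 0 ≤ s := by positivity
  have hsum : φ (dstar * γrel) + φ (dstar + γabs) ≤ φ s := by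
    have := superadd_of_convex hconv h0 (mul_nonneg hd.le hγrel)
      (by linarith : (0:ℝ) ≤ dstar + γabs)
    have heq : dstar * γrel + (dstar + γabs) = s := by rw [hsdef]; ring
    rwa [heq] at this
  have hc'le : c' ≤ φ s := by rw [hexp] at hbound; linarith
  -- ψ c' ∈ Ici 0
  obtain ⟨x, hx, hfx⟩ := hbij.surjOn (Set.mem_Ici.2 hc')
  have hψc : ψ c' = x := by rw [← hfx, hinv_left x hx]
  have hψnn : 0 ≤ ψ c' := hψc ▸ hx
  have hφψ : φ (ψ c') = c' := hinv_right c' hc'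
  -- conclude
  by_contra hcon
  push_neg at hcon
  have := hmono (Set.mem_Ici.2 hsn) (Set.mem_Ici.2 hψnn) (by rw [hd'] at hcon; exact hcon)
  rw [hφψ] at this
  linarith
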